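/- Let A, B ∈ ℝ^{n×n} be Schur-stable nonnegative matrices. There exists a vector v ∈ ℝ^n with all entries strictly positive such that Av ≪ v and Bv ≪ v (entrywise strict) if and only if every row selection C formed from A and B is Schur-stable. -/

import Mathlib

open Matrix
open scoped ENNReal

/-- Spectral radius of a real matrix: the spectral radius of its complexification. -/
noncomputable def specRad {m : Type*} [Fintype m] [DecidableEq m]
    (A : Matrix m m ℝ) : ℝ≥0∞ :=
  spectralRadius ℂ (A.map Complex.ofReal)

/-- C is a row selection of A and B: each row of C is the corresponding row of A or B. -/
def IsRowSelection {n : ℕ} (A B C : Matrix (Fin n) (Fin n) ℝ) : Prop :=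
  ∀ i : Fin n, (∀ j, C i j = A i j) ∨ (∀ j, C i j = B i j)

open Filter
open scoped NNReal

section AuxStmt13

attribute [local instance] Matrix.linftyOpNormedRing Matrix.linftyOpNormedAlgebra

lemma entry_nnnorm_le {n : ℕ} (M : Matrix (Fin n) (Fin n) ℂ) (i j : Fin n) : ‖M i j‖₊ ≤ ‖M‖₊ := by
  rw [Matrix.linfty_opNNNorm_def]
  calc ‖M i j‖₊ ≤ ∑ j, ‖M i j‖₊ := Finset.single_le_sum (f := fun j => ‖M i j‖₊) (fun _ _ => zero_le) (Finset.mem_univ j)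
  _ ≤ _ := Finset.le_sup (f := fun i => ∑ j, ‖M i j‖₊) (Finset.mem_univ i)

lemma entry_pow_tendsto_zero {n : ℕ} {M : Matrix (Fin n) (Fin n) ℝ} (hMs : specRad M < 1)
    (i j : Fin n) : Tendsto (fun k => (M ^ k) i j) atTop (nhds 0) := by
  haveI : CompleteSpace (Matrix (Fin n) (Fin n) ℂ) := FiniteDimensional.complete ℂ _
  set N : Matrix (Fin n) (Fin n) ℂ := M.map Complex.ofReal with hN
  have hNk : ∀ k : ℕ, N ^ k = (M ^ k).map Complex.ofReal := by
    intro k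
    have : N = Complex.ofRealHom.mapMatrix M := rfl
    rw [this, ← map_pow]; rfl
  obtain ⟨r, hr1, hr2⟩ := ENNReal.lt_iff_exists_nnreal_btwn.mp hMs
  have hr : (r : ℝ) < 1 := by exact_mod_cast ENNReal.coe_lt_one_iff.mp hr2
  have T := spectrum.pow_nnnorm_pow_one_div_tendsto_nhds_spectralRadius N
  have hev : ∀ᶠ k : ℕ in atTop, (‖N ^ k‖₊ : ℝ≥0∞) ^ (1 / (k : ℝ)) < r :=
    T.eventually_lt_const hr1
  have hev2 : ∀ᶠ k : ℕ in atTop, ‖N ^ k‖ ≤ (r : ℝ) ^ k := by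
    filter_upwards [hev, eventually_ge_atTop 1] with k hk hk1
    have hk0 : (k : ℝ) ≠ 0 := by positivity
    have : ((‖N ^ k‖₊ : ℝ≥0∞) ^ (1 / (k : ℝ))) ^ (k : ℝ) ≤ (r : ℝ≥0∞) ^ (k : ℝ) :=
      ENNReal.rpow_le_rpow hk.le (by positivity)
    rw [← ENNReal.rpow_mul, one_div, inv_mul_cancel₀ hk0, ENNReal.rpow_one,
      ENNReal.rpow_natCast, ← ENNReal.coe_pow, ENNReal.coe_le_coe] at this
    have h2 : (‖N ^ k‖₊ : ℝ) ≤ (r : ℝ) ^ k := by exact_mod_cast this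
    simpa using h2
  have hg : Tendsto (fun k : ℕ => (r : ℝ) ^ k) atTop (nhds 0) :=
    tendsto_pow_atTop_nhds_zero_of_lt_one r.coe_nonneg hr
  apply squeeze_zero_norm' _ hg
  filter_upwards [hev2] with k hk
  calc ‖(M ^ k) i j‖ = ‖(N ^ k) i j‖ := by rw [hNk]; simp [Matrix.map_apply]
  _ ≤ ‖N ^ k‖ := by exact_mod_cast entry_nnnorm_le (N ^ k) i j
  _ ≤ (r : ℝ) ^ k := hk

lemma isUnit_one_sub {n : ℕ} {M : Matrix (Fin n) (Fin n) ℝ} (hMs : specRad M < 1) :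
    IsUnit (1 - M) := by
  haveI : CompleteSpace (Matrix (Fin n) (Fin n) ℂ) := FiniteDimensional.complete ℂ _
  set N : Matrix (Fin n) (Fin n) ℂ := M.map Complex.ofReal with hN
  have h1 : (1 : ℂ) ∈ resolventSet ℂ N := by
    apply spectrum.mem_resolventSet_of_spectralRadius_lt
    have hMs' : spectralRadius ℂ N < 1 := hMs
    simpa using hMs'
  have hU : IsUnit (1 - N) := by
    simpa [resolventSet, Set.mem_setOf_eq, Algebra.algebraMap_eq_smul_one] using h1
  have hdet : (1 - N).det ≠ 0 := by
    intro h
    exact (Matrix.isUnit_iff_isUnit_det _ |>.mp hU).ne_zero (by simp [h])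
  have heq : (1 - N) = (1 - M).map Complex.ofReal := by
    have : (1 : Matrix (Fin n) (Fin n) ℂ) - N = Complex.ofRealHom.mapMatrix (1 - M) := by
      rw [map_sub, _root_.map_one]; rfl
    exact this
  rw [Matrix.isUnit_iff_isUnit_det, isUnit_iff_ne_zero]
  intro h0
  apply hdet
  rw [heq]
  have : ((1 - M).map Complex.ofReal).det = ((1 - M).det : ℂ) := by
    exact (RingHom.map_det Complex.ofRealHom (1 - M)).symm
  rw [this, h0, Complex.ofReal_zero]

lemma pow_entry_nonneg {n : ℕ} {M : Matrix (Fin n) (Fin n) ℝ} (h : ∀ i j, 0 ≤ M i j) (k : ℕ) :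
    ∀ i j, 0 ≤ (M ^ k) i j := by
  induction k with
  | zero => intro i j; rw [pow_zero, Matrix.one_apply]; split <;> norm_num
  | succ k ih =>
    intro i j; rw [pow_succ, Matrix.mul_apply]
    exact Finset.sum_nonneg fun l _ => mul_nonneg (ih i l) (h l j)

lemma exists_resolvent {n : ℕ} {M : Matrix (Fin n) (Fin n) ℝ} (hM0 : ∀ i j, 0 ≤ M i j)
    (hMs : specRad M < 1) :
    ∃ P : Matrix (Fin n) (Fin n) ℝ, (1 - M) * P = 1 ∧ P * (1 - M) = 1 ∧
      ∀ i j, (1 : Matrix (Fin n) (Fin n) ℝ) i j ≤ P i j := by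
  obtain ⟨u, hu⟩ := isUnit_one_sub hMs
  refine ⟨↑u⁻¹, by rw [← hu]; exact u.mul_inv, by rw [← hu]; exact u.inv_mul, ?_⟩
  intro i j
  set P : Matrix (Fin n) (Fin n) ℝ := ↑u⁻¹ with hP
  have hPl : P * (1 - M) = 1 := by rw [← hu]; exact u.inv_mul
  have key : ∀ N : ℕ, (∑ k ∈ Finset.range N, M ^ k) i j = P i j - (P * M ^ N) i j := by
    intro N
    have h1 : (1 - M) * (∑ k ∈ Finset.range N, M ^ k) = 1 - M ^ N := by
      have := geom_sum_mul M N
      have h2 : (∑ k ∈ Finset.range N, M ^ k) * (1 - M) = 1 - M ^ N := by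
        rw [← neg_sub M 1, mul_neg, this, neg_sub]
      have hc : Commute M (∑ k ∈ Finset.range N, M ^ k) :=
        Commute.sum_right _ _ _ fun l _ => (Commute.pow_right (Commute.refl M) l)
      calc (1 - M) * (∑ k ∈ Finset.range N, M ^ k)
          = (∑ k ∈ Finset.range N, M ^ k) * (1 - M) := by
            rw [sub_mul, mul_sub, one_mul, mul_one, hc.eq]
      _ = 1 - M ^ N := h2
    have h3 : P * ((1 - M) * (∑ k ∈ Finset.range N, M ^ k)) = P * (1 - M ^ N) := by rw [h1]
    rw [← mul_assoc, hPl, one_mul, mul_sub, mul_one] at h3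
    rw [h3]; simp [Matrix.sub_apply]
  have hT : Tendsto (fun N => (P * M ^ N) i j) atTop (nhds 0) := by
    have : ∀ N, (P * M ^ N) i j = ∑ l, P i l * (M ^ N) l j := fun N => Matrix.mul_apply
    simp_rw [this]
    have := tendsto_finset_sum (Finset.univ : Finset (Fin n))
      (fun l _ => (entry_pow_tendsto_zero hMs l j).const_mul (P i l))
    simpa using this
  have hT2 : Tendsto (fun N => (∑ k ∈ Finset.range N, M ^ k) i j) atTop (nhds (P i j)) := by
    simp_rw [key]
    simpa using (tendsto_const_nhds (x := P i j)).sub hT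
  refine ge_of_tendsto hT2 ?_
  filter_upwards [eventually_ge_atTop 1] with N hN
  have : ∀ k, (fun k => (M ^ k) i j) k = (M ^ k) i j := fun _ => rfl
  rw [Matrix.sum_apply]
  calc (1 : Matrix (Fin n) (Fin n) ℝ) i j = (M ^ 0) i j := by rw [pow_zero]
  _ ≤ ∑ k ∈ Finset.range N, (M ^ k) i j :=
      Finset.single_le_sum (f := fun k => (M ^ k) i j)
        (fun k _ => pow_entry_nonneg hM0 k i j) (Finset.mem_range.mpr hN)

lemma specRad_lt_one {n : ℕ} {C : Matrix (Fin n) (Fin n) ℝ} (hC0 : ∀ i j, 0 ≤ C i j)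
    {v : Fin n → ℝ} (hv : ∀ i, 0 < v i) (h : ∀ i, C.mulVec v i < v i) : specRad C < 1 := by
  haveI : CompleteSpace (Matrix (Fin n) (Fin n) ℂ) := FiniteDimensional.complete ℂ _
  rcases Nat.eq_zero_or_pos n with hn | hn
  · subst hn
    haveI : Subsingleton (Matrix (Fin 0) (Fin 0) ℂ) := by
      constructor; intro a b; ext i j; exact i.elim0
    rw [specRad, spectrum.SpectralRadius.of_subsingleton]
    norm_num
  haveI : Nonempty (Fin n) := ⟨⟨0, hn⟩⟩
  haveI : Nontrivial (Matrix (Fin n) (Fin n) ℂ) := Matrix.nonempty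
  set N : Matrix (Fin n) (Fin n) ℂ := C.map Complex.ofReal with hN
  set θ : ℝ := Finset.univ.sup' Finset.univ_nonempty (fun i => C.mulVec v i / v i) with hθ
  have hθlt : θ < 1 := by
    rw [hθ, Finset.sup'_lt_iff]
    exact fun i _ => (div_lt_one (hv i)).mpr (h i)
  have hθ0 : 0 ≤ θ := by
    obtain ⟨i⟩ := (inferInstance : Nonempty (Fin n))
    refine le_trans ?_ (Finset.le_sup' (f := fun i => C.mulVec v i / v i) (Finset.mem_univ i))
    apply div_nonneg _ (hv i).le
    rw [Matrix.mulVec, dotProduct]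
    exact Finset.sum_nonneg fun j _ => mul_nonneg (hC0 i j) (hv j).le
  have hbound : ∀ i, C.mulVec v i ≤ θ * v i := by
    intro i
    rw [← div_le_iff₀ (hv i)]
    exact Finset.le_sup' (f := fun i => C.mulVec v i / v i) (Finset.mem_univ i)
  set r : ℝ≥0 := Real.toNNReal ((θ + 1) / 2) with hr
  have hrc : (r : ℝ) = (θ + 1) / 2 := Real.coe_toNNReal _ (by linarith)
  have hθr : θ < (r : ℝ) := by rw [hrc]; linarith
  have hr1 : (r : ℝ≥0∞) < 1 := by
    rw [← ENNReal.coe_one, ENNReal.coe_lt_coe, ← NNReal.coe_lt_coe, hrc]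
    norm_num; linarith
  refine lt_trans ?_ hr1
  apply spectrum.spectralRadius_lt_of_forall_lt
  intro z hz
  have hnu : ¬ IsUnit (algebraMap ℂ (Matrix (Fin n) (Fin n) ℂ) z - N) := spectrum.mem_iff.mp hz
  have hdet : (algebraMap ℂ (Matrix (Fin n) (Fin n) ℂ) z - N).det = 0 := by
    by_contra hd
    exact hnu ((Matrix.isUnit_iff_isUnit_det _).mpr (isUnit_iff_ne_zero.mpr hd))
  obtain ⟨x, hx0, hx⟩ := Matrix.exists_mulVec_eq_zero_iff.mpr hdet
  have hev : N.mulVec x = z • x := by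
    have h1 : (algebraMap ℂ (Matrix (Fin n) (Fin n) ℂ) z - N) = z • 1 - N := by
      rw [Algebra.algebraMap_eq_smul_one]
    rw [h1, Matrix.sub_mulVec, Matrix.smul_mulVec, Matrix.one_mulVec] at hx
    linear_combination (norm := module) -hx
  obtain ⟨i0, _, hmax⟩ := Finset.exists_max_image Finset.univ (fun i => ‖x i‖ / v i)
    Finset.univ_nonempty
  set t : ℝ := ‖x i0‖ / v i0 with ht
  have htpos : 0 < t := by
    obtain ⟨j, hj⟩ := Function.ne_iff.mp hx0
    have : 0 < ‖x j‖ / v j := div_pos (norm_pos_iff.mpr hj) (hv j)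
    exact lt_of_lt_of_le this (hmax j (Finset.mem_univ j))
  have hxle : ∀ l, ‖x l‖ ≤ t * v l := by
    intro l
    have := hmax l (Finset.mem_univ l)
    rw [div_le_iff₀ (hv l)] at this
    linarith [this]
  have hxi0 : ‖x i0‖ = t * v i0 := by
    rw [ht, div_mul_cancel₀ _ (hv i0).ne']
  have hkey : ‖z‖ * (t * v i0) ≤ θ * (t * v i0) := by
    calc ‖z‖ * (t * v i0) = ‖z‖ * ‖x i0‖ := by rw [hxi0]
    _ = ‖z * x i0‖ := (norm_mul z (x i0)).symm
    _ = ‖N.mulVec x i0‖ := by rw [hev]; rfl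
    _ = ‖∑ l, N i0 l * x l‖ := by rw [Matrix.mulVec, dotProduct]
    _ ≤ ∑ l, ‖N i0 l * x l‖ := norm_sum_le _ _
    _ = ∑ l, C i0 l * ‖x l‖ := by
        refine Finset.sum_congr rfl fun l _ => ?_
        rw [norm_mul]
        congr 1
        show ‖((C i0 l : ℝ) : ℂ)‖ = C i0 l
        rw [Complex.norm_real, Real.norm_eq_abs, abs_of_nonneg (hC0 i0 l)]
    _ ≤ ∑ l, C i0 l * (t * v l) :=
        Finset.sum_le_sum fun l _ => mul_le_mul_of_nonneg_left (hxle l) (hC0 i0 l)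
    _ = t * C.mulVec v i0 := by
        rw [Matrix.mulVec, dotProduct, Finset.mul_sum]
        exact Finset.sum_congr rfl fun l _ => by ring
    _ ≤ t * (θ * v i0) := mul_le_mul_of_nonneg_left (hbound i0) htpos.le
    _ = θ * (t * v i0) := by ring
  have hz2 : ‖z‖ ≤ θ := le_of_mul_le_mul_right hkey (mul_pos htpos (hv i0))
  rw [← NNReal.coe_lt_coe]
  calc (‖z‖₊ : ℝ) = ‖z‖ := rfl
  _ ≤ θ := hz2
  _ < r := hθr

end AuxStmt13

lemma exists_lyap {n : ℕ} {M : Matrix (Fin n) (Fin n) ℝ} (hM0 : ∀ i j, 0 ≤ M i j)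
    (hMs : specRad M < 1) :
    ∃ v : Fin n → ℝ, (∀ i, 1 ≤ v i) ∧ (∀ i, M.mulVec v i = v i - 1) ∧
      ∀ w : Fin n → ℝ, (∀ i, w i - M.mulVec w i ≤ 1) →
        (∀ i, w i ≤ v i) ∧ ∀ i0, w i0 - M.mulVec w i0 ≤ 0 → w i0 + 1 ≤ v i0 := by
  obtain ⟨P, hPr, hPl, hP1⟩ := exists_resolvent hM0 hMs
  have hP0 : ∀ i j, 0 ≤ P i j := fun i j => le_trans (by rw [Matrix.one_apply]; split <;> norm_num) (hP1 i j)
  have hPd : ∀ i, 1 ≤ P i i := fun i => le_trans (by rw [Matrix.one_apply_eq]) (hP1 i i)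
  set v : Fin n → ℝ := P.mulVec (fun _ => 1) with hv
  have hvsum : ∀ i, v i = ∑ j, P i j := by
    intro i; rw [hv, Matrix.mulVec, dotProduct]; simp
  have hv1 : ∀ i, 1 ≤ v i := by
    intro i
    rw [hvsum]
    calc (1 : ℝ) ≤ P i i := hPd i
    _ ≤ ∑ j, P i j := Finset.single_le_sum (f := fun j => P i j)
        (fun j _ => hP0 i j) (Finset.mem_univ i)
  have hMv : ∀ i, M.mulVec v i = v i - 1 := by
    have h1 : (1 - M).mulVec v = fun _ => 1 := by
      rw [hv, Matrix.mulVec_mulVec, hPr, Matrix.one_mulVec]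
    intro i
    have := congrFun h1 i
    rw [Matrix.sub_mulVec, Matrix.one_mulVec] at this
    have h2 : v i - M.mulVec v i = 1 := this
    linarith
  refine ⟨v, hv1, hMv, ?_⟩
  intro w hw
  set u : Fin n → ℝ := fun i => w i - M.mulVec w i with hu
  have hwu : w = P.mulVec u := by
    have h1 : (1 - M).mulVec w = u := by
      funext i; rw [Matrix.sub_mulVec, Matrix.one_mulVec]; rfl
    calc w = (P * (1 - M)).mulVec w := by rw [hPl, Matrix.one_mulVec]
    _ = P.mulVec ((1 - M).mulVec w) := (Matrix.mulVec_mulVec _ _ _).symm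
    _ = P.mulVec u := by rw [h1]
  have hul : ∀ l, u l ≤ 1 := fun l => hw l
  have hdiff : ∀ i, v i - w i = ∑ l, P i l * (1 - u l) := by
    intro i
    rw [hwu, hvsum]
    rw [Matrix.mulVec, dotProduct]
    rw [← Finset.sum_sub_distrib]
    exact Finset.sum_congr rfl fun l _ => by ring
  constructor
  · intro i
    have : 0 ≤ v i - w i := by
      rw [hdiff]
      exact Finset.sum_nonneg fun l _ => mul_nonneg (hP0 i l) (sub_nonneg.mpr (hul l))
    linarith
  · intro i0 hi0
    have : 1 ≤ v i0 - w i0 := by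
      rw [hdiff]
      calc (1 : ℝ) = 1 * 1 := by ring
      _ ≤ P i0 i0 * (1 - u i0) := by
          have hu0 : u i0 ≤ 0 := hi0
          apply mul_le_mul (hPd i0) (by linarith) (by norm_num)
          linarith [hPd i0]
      _ ≤ ∑ l, P i0 l * (1 - u l) :=
          Finset.single_le_sum (f := fun l => P i0 l * (1 - u l))
            (fun l _ => mul_nonneg (hP0 i0 l) (sub_nonneg.mpr (hul l))) (Finset.mem_univ i0)
    linarith

lemma mulVec_row_congr {n : ℕ} {C D : Matrix (Fin n) (Fin n) ℝ} {v : Fin n → ℝ} {i : Fin n}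
    (h : ∀ j, C i j = D i j) : C.mulVec v i = D.mulVec v i := by
  rw [Matrix.mulVec, Matrix.mulVec, dotProduct, dotProduct]
  exact Finset.sum_congr rfl fun j _ => by rw [h j]

/-- Schur-stable nonnegative A, B admit a common strictly positive v with
Av ≪ v and Bv ≪ v iff every row selection formed from A and B is Schur-stable. -/
theorem stmt13 {n : ℕ} (A B : Matrix (Fin n) (Fin n) ℝ)
    (hA0 : ∀ i j, 0 ≤ A i j) (hB0 : ∀ i j, 0 ≤ B i j)
    (hAs : specRad A < 1) (hBs : specRad B < 1) :
    (∃ v : Fin n → ℝ, (∀ i, 0 < v i) ∧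
      (∀ i, A.mulVec v i < v i) ∧ (∀ i, B.mulVec v i < v i)) ↔
    (∀ C : Matrix (Fin n) (Fin n) ℝ, IsRowSelection A B C → specRad C < 1) := by
  constructor
  · rintro ⟨v, hv, hAv, hBv⟩ C hC
    have hC0 : ∀ i j, 0 ≤ C i j := by
      intro i j
      rcases hC i with h | h
      · rw [h j]; exact hA0 i j
      · rw [h j]; exact hB0 i j
    have hCv : ∀ i, C.mulVec v i < v i := by
      intro i
      rcases hC i with h | h
      · rw [mulVec_row_congr h]; exact hAv i
      · rw [mulVec_row_congr h]; exact hBv i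
    exact specRad_lt_one hC0 hv hCv
  · intro h
    set S : (Fin n → Bool) → Matrix (Fin n) (Fin n) ℝ :=
      fun f => Matrix.of fun i j => if f i then A i j else B i j with hS
    have hSrow : ∀ f i, (f i = true → ∀ j, S f i j = A i j) ∧ (f i = false → ∀ j, S f i j = B i j) := by
      intro f i
      constructor <;> intro hf j <;> simp [hS, hf]
    have hSel : ∀ f, IsRowSelection A B (S f) := by
      intro f i
      rcases Bool.eq_false_or_eq_true (f i) with hf | hf
      · exact Or.inl ((hSrow f i).1 hf)
      · exact Or.inr ((hSrow f i).2 hf)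
    have hS0 : ∀ f i j, 0 ≤ S f i j := by
      intro f i j
      rcases hSel f i with hr | hr
      · rw [hr j]; exact hA0 i j
      · rw [hr j]; exact hB0 i j
    choose V hV1 hV2 hV3 using fun f => exists_lyap (hS0 f) (h _ (hSel f))
    obtain ⟨f0, _, hmax⟩ := Finset.exists_max_image Finset.univ (fun f => ∑ i, V f i)
      Finset.univ_nonempty
    set v0 : Fin n → ℝ := V f0 with hv0
    have key : ∀ i, A.mulVec v0 i < v0 i ∧ B.mulVec v0 i < v0 i := by
      by_contra hbad
      push_neg at hbad
      obtain ⟨i0, hi0⟩ := hbad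
      have hi0' : v0 i0 ≤ A.mulVec v0 i0 ∨ v0 i0 ≤ B.mulVec v0 i0 := by
        by_cases hA : A.mulVec v0 i0 < v0 i0
        · exact Or.inr (hi0 hA)
        · exact Or.inl (not_lt.mp hA)
      set d : Fin n → Bool := fun i => decide (B.mulVec v0 i ≤ A.mulVec v0 i) with hd
      have hDv : ∀ i, (S d).mulVec v0 i = max (A.mulVec v0 i) (B.mulVec v0 i) := by
        intro i
        by_cases hc : B.mulVec v0 i ≤ A.mulVec v0 i
        · rw [mulVec_row_congr ((hSrow d i).1 (by simp [hd, hc])), max_eq_left hc]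
        · rw [mulVec_row_congr ((hSrow d i).2 (by simp [hd, hc])), max_eq_right (le_of_not_ge hc)]
      have hw : ∀ i, v0 i - (S d).mulVec v0 i ≤ 1 := by
        intro i
        have h1 : (S f0).mulVec v0 i = v0 i - 1 := hV2 f0 i
        have h2 : (S f0).mulVec v0 i ≤ (S d).mulVec v0 i := by
          rw [hDv i]
          rcases Bool.eq_false_or_eq_true (f0 i) with hf | hf
          · rw [mulVec_row_congr ((hSrow f0 i).1 hf)]; exact le_max_left _ _
          · rw [mulVec_row_congr ((hSrow f0 i).2 hf)]; exact le_max_right _ _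
        linarith
      obtain ⟨hle, hstrict⟩ := hV3 d v0 hw
      have hneg : v0 i0 - (S d).mulVec v0 i0 ≤ 0 := by
        rw [hDv i0]
        rcases hi0' with h' | h'
        · have := le_max_left (A.mulVec v0 i0) (B.mulVec v0 i0); linarith
        · have := le_max_right (A.mulVec v0 i0) (B.mulVec v0 i0); linarith
      have hstep := hstrict i0 hneg
      have hsum : ∑ i, v0 i < ∑ i, V d i :=
        Finset.sum_lt_sum (fun i _ => hle i) ⟨i0, Finset.mem_univ i0, by linarith⟩
      exact absurd (hmax d (Finset.mem_univ d)) (not_le.mpr hsum)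
    exact ⟨v0, fun i => by linarith [hV1 f0 i], fun i => (key i).1, fun i => (key i).2⟩
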